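/- For each integer m ≥ 2, let T_m = { a : 1 ≤ a ≤ m², gcd(a, m) = 1, and m² divides a^{λ(m)} − 1 }. Then lim_{m → ∞} |T_m| / φ(m²) = 0, where φ is Euler's totient function. -/

import Mathlib

/-- The Carmichael function `λ(m)`: the smallest positive integer `n` such that
`a ^ n ≡ 1 (mod m)` for every integer `a` coprime to `m`. -/
noncomputable def carmichael (m : ℕ) : ℕ :=
  sInf {n : ℕ | 0 < n ∧ ∀ a : ℤ, Int.gcd a m = 1 → a ^ n ≡ 1 [ZMOD (m : ℤ)]}

/-- The Carmichael quotient `C_m(a) = (a^{λ(m)} - 1) / m`. -/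
noncomputable def carQuot (m : ℕ) (a : ℤ) : ℤ := (a ^ carmichael m - 1) / m
open scoped Classical in
/-- `T m` is the set of bases `a` with `1 ≤ a ≤ m²`, `gcd(a, m) = 1`, for which
`m` is a Carmichael–Wieferich number with base `a`, i.e. `m² ∣ a^{λ(m)} - 1`. -/
noncomputable def wieferichCount (m : ℕ) : ℕ :=
  ((Finset.Icc 1 (m ^ 2)).filter
    (fun a => Nat.gcd a m = 1 ∧ ((m : ℤ) ^ 2 ∣ (a : ℤ) ^ carmichael m - 1))).card

/-!
`T_m` is the kernel of `x ↦ x ^ λ(m)` on `(ℤ/m²ℤ)ˣ`, so `|T_m|` is `φ(m²)` divided by the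
size of the image. The image contains the `λ(m)`-th power of an element of order `λ(m²)`, so
it has at least `λ(m²)/λ(m)` elements, and it remains to show `λ(m²)/λ(m) → ∞`.

If `p ^ e ∥ m`, then `p ^ (2e - 2)` divides `λ(m²)` (even `p ^ (2e - 1)` for odd `p`), while
`v_p(λ(m)) ≤ v_p(φ(m)) = e - 1 + ∑_{q ∣ m} v_p(q - 1)`. For the largest prime factor `P` of
`m` the sum vanishes, so the ratio is at least `P` when `P` is odd. Hence if the ratio is
below `B`, all prime factors of `m` are below `B`, so each sum is at most `B²`, each exponent
is below `B² + B + 1`, and `m` divides `B! ^ (B² + B + 1)`.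
-/

open Filter

theorem exponent_div_dvd_card_range_powMonoidHom {G : Type*} [CommGroup G] [Finite G] {L : ℕ}
    (hL : L ∣ Monoid.exponent G) (hL0 : L ≠ 0) :
    Monoid.exponent G / L ∣ Nat.card (powMonoidHom L : G →* G).range := by
  obtain ⟨g, hg⟩ := Monoid.exists_orderOf_eq_exponent (Monoid.ExponentExists.of_finite (G := G))
  have h := orderOf_dvd_natCard (⟨g ^ L, g, rfl⟩ : (powMonoidHom L : G →* G).range)
  rw [← Subgroup.orderOf_coe] at h
  rwa [orderOf_pow_of_dvd hL0 (hg ▸ hL), hg] at h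

namespace Nat

theorem factorization_totient_add_one {m p : ℕ} (hp : p ∈ m.primeFactors) :
    m.totient.factorization p + 1 =
      m.factorization p + ∑ q ∈ m.primeFactors, (q - 1).factorization p := by
  have hm : m ≠ 0 := (mem_primeFactors.1 hp).2.2
  have hq (q) (hq : q ∈ m.primeFactors) : q - 1 ≠ 0 := by
    have := (prime_of_mem_primeFactors hq).two_le
    omega
  have h := congrArg (fun n => n.factorization p) (totient_mul_prod_primeFactors m)
  rw [factorization_mul (totient_pos.2 (pos_of_ne_zero hm)).ne'
      (Finset.prod_ne_zero_iff.2 fun q hq => (prime_of_mem_primeFactors hq).ne_zero),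
    factorization_mul hm (Finset.prod_ne_zero_iff.2 hq),
    factorization_prod fun q hq => (prime_of_mem_primeFactors hq).ne_zero,
    factorization_prod hq] at h
  have hrad : ∑ q ∈ m.primeFactors, q.factorization p = 1 := by
    rw [Finset.sum_eq_single_of_mem p hp fun q hq hqp => ?_,
      (prime_of_mem_primeFactors hp).factorization_self]
    rw [(prime_of_mem_primeFactors hq).factorization, Finsupp.single_apply, if_neg hqp]
  simpa [Finset.sum_apply', hrad] using h

theorem sum_primeFactors_factorization_sub_one_le {m p B : ℕ}
    (h : ∀ q ∈ m.primeFactors, q < B) :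
    ∑ q ∈ m.primeFactors, (q - 1).factorization p ≤ B * B := by
  calc ∑ q ∈ m.primeFactors, (q - 1).factorization p ≤ ∑ _q ∈ m.primeFactors, B :=
        Finset.sum_le_sum fun q hq => by
          have := (prime_of_mem_primeFactors hq).two_le
          have := factorization_lt p (show q - 1 ≠ 0 by omega)
          have := h q hq
          omega
    _ = m.primeFactors.card * B := by rw [Finset.sum_const, smul_eq_mul]
    _ ≤ B * B := mul_le_mul_right B
        ((Finset.card_le_card fun q hq => Finset.mem_range.2 (h q hq)).trans_eq
          (Finset.card_range B))

end Nat

namespace ArithmeticFunction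

open scoped Nat

theorem carmichael_ne_zero {n : ℕ} (hn : n ≠ 0) : carmichael n ≠ 0 := by
  rw [carmichael_eq_exponent hn]
  exact Monoid.exponent_ne_zero_of_finite

theorem pow_sub_one_dvd_carmichael_prime_pow {p : ℕ} (hp : p.Prime) (hp2 : p ≠ 2) (k : ℕ) :
    p ^ (k - 1) ∣ carmichael (p ^ k) := by
  rcases k with _ | k
  · simp
  · rw [carmichael_pow_of_prime_ne_two _ hp hp2, Nat.totient_prime_pow_succ hp]
    exact dvd_mul_right _ _

theorem pow_sub_two_dvd_carmichael_prime_pow {p : ℕ} (hp : p.Prime) (k : ℕ) :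
    p ^ (k - 2) ∣ carmichael (p ^ k) := by
  by_cases hp2 : p = 2
  · subst hp2
    by_cases hk : k = 2
    · simp [hk]
    · rw [carmichael_two_pow_of_ne_two hk]
  · exact (pow_dvd_pow p (by omega)).trans (pow_sub_one_dvd_carmichael_prime_pow hp hp2 k)

theorem carmichael_prime_pow_factorization_dvd (m p k : ℕ) :
    carmichael (p ^ (k * m.factorization p)) ∣ carmichael (m ^ k) :=
  carmichael_dvd (by rw [mul_comm, pow_mul]; exact pow_dvd_pow_of_dvd (Nat.ordProj_dvd m p) k)

theorem pow_le_carmichael_sq_div {m p k : ℕ} (hp : p ∈ m.primeFactors)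
    (hk : p ^ k ∣ carmichael (m ^ 2)) :
    p ^ (k - (m.factorization p - 1 + ∑ q ∈ m.primeFactors, (q - 1).factorization p)) ≤
      carmichael (m ^ 2) / carmichael m := by
  obtain ⟨hpp, hpm, hm⟩ := Nat.mem_primeFactors.1 hp
  have hsq : carmichael (m ^ 2) ≠ 0 := carmichael_ne_zero (pow_ne_zero 2 hm)
  have hdvd : carmichael m ∣ carmichael (m ^ 2) := carmichael_dvd (dvd_pow_self m two_ne_zero)
  have hratio : carmichael (m ^ 2) / carmichael m ≠ 0 :=
    (Nat.div_pos (Nat.le_of_dvd (Nat.pos_of_ne_zero hsq) hdvd)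
      (Nat.pos_of_ne_zero (carmichael_ne_zero hm))).ne'
  have hk' : k ≤ (carmichael (m ^ 2)).factorization p :=
    (hpp.pow_dvd_iff_le_factorization hsq).1 hk
  have hcar : (carmichael m).factorization p ≤ m.totient.factorization p :=
    (Nat.factorization_le_iff_dvd (carmichael_ne_zero hm)
      (Nat.totient_pos.2 (Nat.pos_of_ne_zero hm)).ne').2 (carmichael_dvd_totient m) p
  have he : 1 ≤ m.factorization p := hpp.factorization_pos_of_dvd hm hpm
  have htot := Nat.factorization_totient_add_one hp
  calc _ ≤ p ^ (carmichael (m ^ 2) / carmichael m).factorization p := by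
        rw [Nat.factorization_div hdvd, Finsupp.tsub_apply]
        exact Nat.pow_le_pow_right hpp.pos (by omega)
    _ ≤ _ := Nat.ordProj_le p hratio

theorem primeFactors_lt_of_carmichael_sq_div_lt {m B : ℕ} (hB : 3 ≤ B)
    (h : carmichael (m ^ 2) / carmichael m < B) : ∀ q ∈ m.primeFactors, q < B := by
  intro q hq
  set P := m.primeFactors.max' ⟨q, hq⟩
  have hP : P ∈ m.primeFactors := Finset.max'_mem _ _
  obtain ⟨hPp, hPm, hm⟩ := Nat.mem_primeFactors.1 hP
  refine (Finset.le_max' _ q hq).trans_lt ?_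
  by_cases hP2 : P = 2
  · omega
  have hS : ∑ q ∈ m.primeFactors, (q - 1).factorization P = 0 :=
    Finset.sum_eq_zero fun q hq => Nat.factorization_eq_zero_of_lt
      (by have := Finset.le_max' _ q hq; have := (Nat.prime_of_mem_primeFactors hq).two_le; omega)
  have he : 1 ≤ m.factorization P := hPp.factorization_pos_of_dvd hm hPm
  have hle := pow_le_carmichael_sq_div hP ((pow_sub_one_dvd_carmichael_prime_pow hPp hP2 _).trans
    (carmichael_prime_pow_factorization_dvd m P 2))
  rw [hS] at hle
  calc P ≤ P ^ (2 * m.factorization P - 1 - (m.factorization P - 1 + 0)) :=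
        Nat.le_self_pow (by omega) P
    _ < B := hle.trans_lt h

theorem factorization_lt_of_carmichael_sq_div_lt {m p B : ℕ} (hB : 3 ≤ B)
    (h : carmichael (m ^ 2) / carmichael m < B) (hp : p ∈ m.primeFactors) :
    m.factorization p < B * B + B + 1 := by
  have hpp := Nat.prime_of_mem_primeFactors hp
  have hle := pow_le_carmichael_sq_div hp ((pow_sub_two_dvd_carmichael_prime_pow hpp _).trans
    (carmichael_prime_pow_factorization_dvd m p 2))
  have hS := Nat.sum_primeFactors_factorization_sub_one_le (p := p)
    (primeFactors_lt_of_carmichael_sq_div_lt hB h)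
  have := (Nat.lt_pow_self hpp.one_lt).trans_le (hle.trans_lt h).le
  omega

theorem dvd_factorial_pow_of_carmichael_sq_div_lt {m B : ℕ} (hm : m ≠ 0) (hB : 3 ≤ B)
    (h : carmichael (m ^ 2) / carmichael m < B) : m ∣ B ! ^ (B * B + B + 1) := by
  refine (Nat.factorization_prime_le_iff_dvd hm (by positivity)).1 fun p hp => ?_
  rw [Nat.factorization_pow, Finsupp.smul_apply, smul_eq_mul]
  by_cases hpm : p ∣ m
  · have hpm' : p ∈ m.primeFactors := Nat.mem_primeFactors.2 ⟨hp, hpm, hm⟩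
    have hpB := primeFactors_lt_of_carmichael_sq_div_lt hB h p hpm'
    have h1 : 1 ≤ (B !).factorization p := (hp.dvd_iff_one_le_factorization
      (Nat.factorial_ne_zero B)).1 (Nat.dvd_factorial hp.pos hpB.le)
    have := factorization_lt_of_carmichael_sq_div_lt hB h hpm'
    nlinarith
  · simp [Nat.factorization_eq_zero_of_not_dvd hpm]

theorem tendsto_carmichael_sq_div_carmichael :
    Tendsto (fun m => carmichael (m ^ 2) / carmichael m) atTop atTop := by
  refine tendsto_atTop.2 fun B => ?_
  set C := max B 3
  filter_upwards [eventually_gt_atTop (C ! ^ (C * C + C + 1))] with m hm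
  by_contra! h
  exact (Nat.le_of_dvd (by positivity) (dvd_factorial_pow_of_carmichael_sq_div_lt (by omega)
    (le_max_right B 3) (h.trans_le (le_max_left B 3)))).not_gt hm

end ArithmeticFunction

theorem forall_intModEq_one_iff_units_pow_eq_one (m n : ℕ) :
    (∀ a : ℤ, Int.gcd a m = 1 → a ^ n ≡ 1 [ZMOD m]) ↔ ∀ u : (ZMod m)ˣ, u ^ n = 1 := by
  have hunit (a : ℤ) : Int.gcd a m = 1 ↔ IsUnit (a : ZMod m) := by
    rw [ZMod.coe_int_isUnit_iff_isCoprime, isCoprime_comm, Int.isCoprime_iff_gcd_eq_one]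
  simp only [hunit, ← ZMod.intCast_eq_intCast_iff, Int.cast_pow, Int.cast_one]
  constructor
  · intro h u
    obtain ⟨a, ha⟩ := ZMod.intCast_surjective (u : ZMod m)
    exact Units.ext (by simpa [ha] using h a (ha ▸ u.isUnit))
  · rintro h a ⟨u, hu⟩
    rw [← hu, ← Units.val_pow_eq_pow_val, h, Units.val_one]

theorem carmichael_eq_arithmeticFunction_carmichael {m : ℕ} (hm : m ≠ 0) :
    carmichael m = ArithmeticFunction.carmichael m := by
  simp only [carmichael, ArithmeticFunction.carmichael_eq_exponent hm, Monoid.exponent_eq_sInf,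
    forall_intModEq_one_iff_units_pow_eq_one]

theorem sq_dvd_pow_sub_one_iff (m a L : ℕ) :
    (m : ℤ) ^ 2 ∣ (a : ℤ) ^ L - 1 ↔ (a : ZMod (m ^ 2)) ^ L = 1 := by
  rw [← sub_eq_zero, ← Nat.cast_pow, ← ZMod.intCast_zmod_eq_zero_iff_dvd]
  push_cast
  rfl

theorem wieferichCount_eq_card_ker {m : ℕ} (hm : 2 ≤ m) :
    wieferichCount m = Nat.card (powMonoidHom (carmichael m) : (ZMod (m ^ 2))ˣ →* _).ker := by
  have : NeZero (m ^ 2) := ⟨by positivity⟩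
  have hcop {a : ℕ} : Nat.gcd a m = 1 ↔ a.Coprime (m ^ 2) :=
    (Nat.coprime_pow_right_iff two_pos _ _).symm
  rw [Nat.card_eq_fintype_card, Fintype.card_subtype, wieferichCount]
  refine Finset.card_bij' (fun a ha => ZMod.unitOfCoprime a (hcop.1 (Finset.mem_filter.1 ha).2.1))
    (fun u _ => (u : ZMod (m ^ 2)).val) ?_ ?_ ?_ ?_
  · intro a ha
    simp only [Finset.mem_filter, Finset.mem_univ, true_and, MonoidHom.mem_ker,
      powMonoidHom_apply] at ha ⊢
    exact Units.ext (by simpa [ZMod.coe_unitOfCoprime, sq_dvd_pow_sub_one_iff] using ha.2.2)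
  · intro u hu
    simp only [Finset.mem_filter, Finset.mem_univ, true_and, MonoidHom.mem_ker,
      powMonoidHom_apply, Finset.mem_Icc] at hu ⊢
    have hu' : ((u : ZMod (m ^ 2)).val).Coprime (m ^ 2) := ZMod.val_coe_unit_coprime u
    refine ⟨⟨Nat.pos_of_ne_zero fun h0 => ?_, (ZMod.val_lt _).le⟩, hcop.2 hu', ?_⟩
    · rw [h0, Nat.coprime_zero_left] at hu'
      have : 2 ^ 2 ≤ m ^ 2 := Nat.pow_le_pow_left hm 2
      omega
    · rw [sq_dvd_pow_sub_one_iff, ZMod.natCast_zmod_val, ← Units.val_pow_eq_pow_val, hu,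
        Units.val_one]
  · intro a ha
    simp only [Finset.mem_filter, Finset.mem_Icc] at ha
    have ha_lt : a < m ^ 2 := lt_of_le_of_ne ha.1.2 fun h => by
      have := ha.2.1
      rw [h, Nat.gcd_eq_right (dvd_pow_self m two_ne_zero)] at this
      omega
    simp [ZMod.coe_unitOfCoprime, ZMod.val_natCast_of_lt ha_lt]
  · intro u _
    ext
    simp [ZMod.coe_unitOfCoprime]

theorem wieferichCount_mul_dvd_totient {m : ℕ} (hm : 2 ≤ m) :
    wieferichCount m *
        (ArithmeticFunction.carmichael (m ^ 2) / ArithmeticFunction.carmichael m) ∣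
      (m ^ 2).totient := by
  have : NeZero (m ^ 2) := ⟨by positivity⟩
  have hker_range := (powMonoidHom (carmichael m) : (ZMod (m ^ 2))ˣ →* _).ker.card_mul_index
  rw [Subgroup.index_ker, Nat.card_eq_fintype_card (α := (ZMod _)ˣ), ZMod.card_units_eq_totient,
    ← wieferichCount_eq_card_ker hm] at hker_range
  rw [← hker_range, carmichael_eq_arithmeticFunction_carmichael (by omega),
    ArithmeticFunction.carmichael_eq_exponent' (m ^ 2)]
  refine mul_dvd_mul_left _ (exponent_div_dvd_card_range_powMonoidHom ?_ ?_)
  · rw [← ArithmeticFunction.carmichael_eq_exponent']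
    exact ArithmeticFunction.carmichael_dvd (dvd_pow_self m two_ne_zero)
  · exact ArithmeticFunction.carmichael_ne_zero (by omega)

theorem stmt15 :
    Filter.Tendsto (fun m : ℕ => (wieferichCount m : ℝ) / (Nat.totient (m ^ 2) : ℝ))
      Filter.atTop (nhds 0) := by
  have hratio := ArithmeticFunction.tendsto_carmichael_sq_div_carmichael
  refine squeeze_zero' (Eventually.of_forall fun m => by positivity) ?_
    (tendsto_inv_atTop_zero.comp (tendsto_natCast_atTop_atTop.comp hratio))
  filter_upwards [eventually_ge_atTop 2, hratio.eventually_ge_atTop 1] with m hm hr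
  have htot : 0 < (m ^ 2).totient := Nat.totient_pos.2 (by positivity)
  have hle : (wieferichCount m : ℝ) *
      (ArithmeticFunction.carmichael (m ^ 2) / ArithmeticFunction.carmichael m : ℕ) ≤
        (m ^ 2).totient := by
    exact_mod_cast Nat.le_of_dvd htot (wieferichCount_mul_dvd_totient hm)
  rw [Function.comp_apply, Function.comp_apply, div_le_iff₀ (by exact_mod_cast htot),
    le_inv_mul_iff₀ (by exact_mod_cast hr), mul_comm]
  exact hle
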